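/- Let G be a graph with a total order ≺ on its vertices, and β a positive integer. If χ(G) > 2β+2, then G has an edge uv such that the subgraph of G induced on the vertices strictly between u and v in the order ≺ has chromatic number greater than β. -/

import Mathlib

/-!
Cut the vertices, in order, into consecutive blocks, each the longest initial segment of the
remaining vertices that is `(β+1)`-colorable. An edge `u ≺ v` cannot jump over a whole block `B`:
`B` together with the next vertex would lie in `(u, v]`, which is `(β+1)`-colorable since
`G(u,v)` is `β`-colorable. So edges stay inside a block or join consecutive blocks, and coloring
each block with `β+1` colors from one of two alternating palettes gives a `(2β+2)`-coloring.
-/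

open Set

namespace SimpleGraph

variable {V : Type} {G : SimpleGraph V} {n : ℕ} {s t : Set V}

theorem Colorable.induce_of_subset (h : (G.induce t).Colorable n) (hst : s ⊆ t) :
    (G.induce s).Colorable n :=
  h.of_hom (induceHomOfLE G hst).toHom

theorem Colorable.induce_insert [DecidableEq V] (h : (G.induce s).Colorable n) (a : V) :
    (G.induce (insert a s)).Colorable (n + 1) := by
  obtain ⟨C⟩ := h
  refine ⟨Coloring.mk (fun x => if hx : (x : V) = a then Fin.last n
    else (C ⟨x, x.2.resolve_left hx⟩).castSucc) ?_⟩
  rintro ⟨x, hx⟩ ⟨y, hy⟩ (hxy : G.Adj x y)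
  by_cases hxa : x = a <;> by_cases hya : y = a <;> simp only [hxa, hya, dite_true, dite_false]
  · exact absurd (hxa.trans hya.symm) hxy.ne
  · exact (Fin.castSucc_lt_last _).ne'
  · exact (Fin.castSucc_lt_last _).ne
  · exact fun hc => C.valid (show (G.induce s).Adj ⟨x, _⟩ ⟨y, _⟩ from hxy)
      (Fin.castSucc_injective _ hc)

theorem colorable_induce_of_subsingleton (hs : s.Subsingleton) (hn : 1 ≤ n) :
    (G.induce s).Colorable n := by
  classical
  obtain rfl | ⟨a, rfl⟩ := hs.eq_empty_or_singleton
  · exact .of_isEmpty n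
  · rw [← insert_empty_eq]
    exact ((Colorable.of_isEmpty 0).induce_insert a).mono hn

variable [LinearOrder V]

def firstBlock (G : SimpleGraph V) (n : ℕ) (s : Set V) : Set V :=
  {x ∈ s | (G.induce (s ∩ Iic x)).Colorable n}

theorem firstBlock_subset : firstBlock G n s ⊆ s := fun _ hx => hx.1

theorem mem_firstBlock_of_le {x y : V} (hx : x ∈ firstBlock G n s) (hy : y ∈ s) (hyx : y ≤ x) :
    y ∈ firstBlock G n s :=
  ⟨hy, hx.2.induce_of_subset (inter_subset_inter_right _ (Iic_subset_Iic.2 hyx))⟩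

theorem firstBlock_nonempty [Finite V] (hs : s.Nonempty) (hn : 1 ≤ n) :
    (firstBlock G n s).Nonempty := by
  obtain ⟨m, hm⟩ := s.toFinite.exists_minimal hs
  refine ⟨m, hm.1, colorable_induce_of_subsingleton ?_ hn⟩
  rintro x ⟨hxs, hxm⟩ y ⟨hys, hym⟩
  exact (le_antisymm hxm (hm.le_of_le hxs hxm)).trans (le_antisymm hym (hm.le_of_le hys hym)).symm

theorem colorable_induce_firstBlock [Finite V] : (G.induce (firstBlock G n s)).Colorable n := by
  rcases (firstBlock G n s).eq_empty_or_nonempty with hB | hB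
  · rw [hB]
    exact .of_isEmpty n
  obtain ⟨m, hm⟩ := (toFinite _).exists_maximal hB
  refine hm.1.2.induce_of_subset fun x hx => ⟨hx.1, ?_⟩
  exact (le_total x m).elim id (hm.le_of_ge hx)

/-- The part of `s \ firstBlock G (n + 1) s` up to `y` lies in `(x, y]`. -/
theorem mem_firstBlock_sdiff_of_adj
    (hG : ∀ u v, G.Adj u v → u < v → (G.induce (Ioo u v)).Colorable n) {x y : V}
    (hx : x ∈ firstBlock G (n + 1) s) (hy : y ∈ s \ firstBlock G (n + 1) s) (hxy : G.Adj x y) :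
    y ∈ firstBlock G (n + 1) (s \ firstBlock G (n + 1) s) := by
  classical
  have hxz : ∀ z ∈ s \ firstBlock G (n + 1) s, x < z := fun z hz =>
    lt_of_not_ge fun hzx => hz.2 (mem_firstBlock_of_le hx hz.1 hzx)
  refine ⟨hy, ((hG x y hxy (hxz y hy)).induce_insert y).induce_of_subset ?_⟩
  rintro z ⟨hz, hzy⟩
  rcases (mem_Iic.1 hzy).eq_or_lt with rfl | hzy
  · exact mem_insert z _
  · exact mem_insert_of_mem y ⟨hxz z hz, hzy⟩

/-- By induction, peeling off the first block; flipping the palettes of the rest frees the first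
palette for the peeled block, whose neighbours outside it all lie in the rest's first block. -/
theorem exists_coloring_of_forall_adj_colorable_induce_Ioo [Finite V]
    (hG : ∀ u v, G.Adj u v → u < v → (G.induce (Ioo u v)).Colorable n) (s : Set V) :
    ∃ c : V → Bool × Fin (n + 1), (∀ x ∈ s, ∀ y ∈ s, G.Adj x y → c x ≠ c y) ∧
      ∀ x ∈ firstBlock G (n + 1) s, (c x).1 = false := by
  classical
  induction s using WellFoundedLT.induction with | _ s ih
  rcases s.eq_empty_or_nonempty with rfl | hs
  · exact ⟨fun _ => (false, 0), by simp, fun _ _ => rfl⟩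
  set B := firstBlock G (n + 1) s
  obtain ⟨c, hc, hcB⟩ := ih (s \ B)
    (firstBlock_subset.sdiff_ssubset_of_nonempty (firstBlock_nonempty hs (by omega)))
  obtain ⟨d⟩ : (G.induce B).Colorable (n + 1) := colorable_induce_firstBlock
  have hcross : ∀ x y, x ∈ B → y ∈ s → y ∉ B → G.Adj x y → (c y).1 = false :=
    fun x y hx hy hyB hxy => hcB y (mem_firstBlock_sdiff_of_adj hG hx ⟨hy, hyB⟩ hxy)
  refine ⟨fun x => if h : x ∈ B then (false, d ⟨x, h⟩) else (!(c x).1, (c x).2), ?_,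
    fun x hx => by simp [hx]⟩
  intro x hx y hy hxy
  by_cases hxB : x ∈ B <;> by_cases hyB : y ∈ B <;>
    simp only [hxB, hyB, dite_true, dite_false, ne_eq, Prod.mk.injEq, not_and]
  · exact fun _ => d.valid (show (G.induce B).Adj ⟨x, hxB⟩ ⟨y, hyB⟩ from hxy)
  · simp [hcross x y hxB hy hyB hxy]
  · simp [hcross y x hyB hx hxB hxy.symm]
  · intro h1 h2
    exact hc x ⟨hx, hxB⟩ y ⟨hy, hyB⟩ hxy (Prod.ext (by simpa using h1) h2)

theorem colorable_of_forall_adj_colorable_induce_Ioo [Finite V]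
    (hG : ∀ u v, G.Adj u v → u < v → (G.induce (Ioo u v)).Colorable n) :
    G.Colorable (2 * n + 2) := by
  obtain ⟨c, hc, -⟩ := exists_coloring_of_forall_adj_colorable_induce_Ioo hG univ
  have := (Coloring.mk c fun h => hc _ trivial _ trivial h).colorable
  simpa [mul_add] using this

end SimpleGraph

open SimpleGraph in
theorem stmt_1_general {V : Type} [Fintype V] [LinearOrder V] (G : SimpleGraph V)
    (β : ℕ)
    (hχ : (2 * β + 2 : ℕ∞) < G.chromaticNumber) :
    ∃ u v, G.Adj u v ∧
      (β : ℕ∞) < (G.induce (Set.Ioo (min u v) (max u v))).chromaticNumber := by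
  by_contra! h
  have hcol : G.Colorable (2 * β + 2) := colorable_of_forall_adj_colorable_induce_Ioo
    fun u v huv hlt => chromaticNumber_le_iff_colorable.1 <| by
      have := h u v huv
      rwa [min_eq_left hlt.le, max_eq_right hlt.le] at this
  exact hχ.not_ge (by exact_mod_cast hcol.chromaticNumber_le)

/-- If `χ(G) > 2β+2`, then `G` has an edge `uv` such that the subgraph of `G` induced on
the vertices strictly between `u` and `v` has chromatic number greater than `β`. -/
theorem stmt_1 {V : Type} [Fintype V] [LinearOrder V] (G : SimpleGraph V)
    (β : ℕ) (hβ : 1 ≤ β)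
    (hχ : (2 * β + 2 : ℕ∞) < G.chromaticNumber) :
    ∃ u v, G.Adj u v ∧
      (β : ℕ∞) < (G.induce (Set.Ioo (min u v) (max u v))).chromaticNumber :=
  stmt_1_general G β hχ
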